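/- Let p be a prime, let 1 ≤ q ≤ p-1, and define S : ℕ → ℤ by S(0)=0, S(1)=-q, S(i) = -q - S(i-2) - 3·S(i-1). Let α(p) be the restricted period of the Fibonacci sequence mod p. Then S(i) ≡ 0 (mod p) if and only if i ≡ 0 (mod α(p)) or i ≡ -1 (mod α(p)). -/
import Mathlib

lemma cassini' : ∀ i : ℕ, (Nat.fib i : ℤ) * Nat.fib (i+2) - (Nat.fib (i+1))^2 = (-1)^(i+1)
  | 0 => by simp
  | (i+1) => by
    have h := cassini' i
    have h2 : (Nat.fib (i+2) : ℤ) = Nat.fib i + Nat.fib (i+1) := by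
      rw [Nat.fib_add_two]; push_cast; ring
    have h3 : (Nat.fib (i+1+2) : ℤ) = Nat.fib (i+1) + Nat.fib (i+2) := by
      rw [show i+1+2 = (i+1)+2 from rfl, Nat.fib_add_two]; push_cast; ring
    rw [h3]
    rw [h2] at h ⊢
    linear_combination (-1 : ℤ) * h

lemma Sform (q : ℕ) (S : ℕ → ℤ) (h0 : S 0 = 0) (h1 : S 1 = -(q : ℤ))
    (hrec : ∀ i, S (i + 2) = -(q : ℤ) - S i - 3 * S (i + 1)) :
    ∀ i, S i = (-1)^i * q * Nat.fib i * Nat.fib (i+1) := by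
  have key : ∀ i, S i = (-1)^i * q * Nat.fib i * Nat.fib (i+1) ∧
      S (i+1) = (-1)^(i+1) * q * Nat.fib (i+1) * Nat.fib (i+2) := by
    intro i
    induction i with
    | zero => constructor <;> simp [h0, h1]
    | succ n ih =>
      obtain ⟨ha, hb⟩ := ih
      refine ⟨hb, ?_⟩
      have hc := cassini' n
      have h2 : (Nat.fib (n+2) : ℤ) = Nat.fib n + Nat.fib (n+1) := by
        rw [Nat.fib_add_two]; push_cast; ring
      have h3 : (Nat.fib (n+3) : ℤ) = Nat.fib (n+1) + Nat.fib (n+2) := by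
        rw [show n+3 = (n+1)+2 from rfl, Nat.fib_add_two]; push_cast; ring
      rw [show n+1+1 = n+2 from rfl, show n+1+2 = n+3 from rfl, hrec n, ha, hb, h3]
      rw [h2] at hc ⊢
      have hpow : ((-1:ℤ))^(n*2) = 1 := by rw [mul_comm, pow_mul]; norm_num
      linear_combination (-1 : ℤ)^(n+1) * q * hc + q * hpow
  exact fun i => (key i).1

lemma fibdvd (p α : ℕ) (hα : IsLeast {n : ℕ | 0 < n ∧ p ∣ Nat.fib n} α) (n : ℕ) :
    p ∣ Nat.fib n ↔ α ∣ n := by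
  obtain ⟨⟨hαpos, hαdvd⟩, hmin⟩ := hα
  constructor
  · intro h
    rcases Nat.eq_zero_or_pos n with rfl | hn
    · exact dvd_zero _
    · have hg : p ∣ Nat.fib (Nat.gcd α n) := by
        rw [Nat.fib_gcd]; exact Nat.dvd_gcd hαdvd h
      have hgpos : 0 < Nat.gcd α n := Nat.gcd_pos_of_pos_right _ hn
      have hle : α ≤ Nat.gcd α n := hmin ⟨hgpos, hg⟩
      have heq : Nat.gcd α n = α := le_antisymm (Nat.gcd_le_left _ hαpos) hle
      exact heq ▸ Nat.gcd_dvd_right α n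
  · intro h
    exact dvd_trans hαdvd (Nat.fib_dvd _ _ h)

theorem stmt6 (p : ℕ) (hp : p.Prime) (q : ℕ) (hq1 : 1 ≤ q) (hq2 : q ≤ p - 1)
    (S : ℕ → ℤ) (h0 : S 0 = 0) (h1 : S 1 = -(q : ℤ))
    (hrec : ∀ i, S (i + 2) = -(q : ℤ) - S i - 3 * S (i + 1))
    (α : ℕ) (hα : IsLeast {n : ℕ | 0 < n ∧ p ∣ Nat.fib n} α) :
    ∀ i : ℕ, (p : ℤ) ∣ S i ↔ (i % α = 0 ∨ (i + 1) % α = 0) := by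
  intro i
  have hαpos : 0 < α := hα.1.1
  have hqlt : q < p := by have := hp.two_le; omega
  have hpq : ¬ p ∣ q := Nat.not_dvd_of_pos_of_lt hq1 hqlt
  have hpu : ¬ (p:ℤ) ∣ ((-1:ℤ))^i := by
    intro h
    have hu := isUnit_of_dvd_unit h ((isUnit_one.neg).pow i)
    rw [Int.isUnit_iff] at hu
    have := hp.two_le
    omega
  have hprime : Prime (p:ℤ) := Nat.prime_iff_prime_int.mp hp
  rw [Sform q S h0 h1 hrec i, hprime.dvd_mul, hprime.dvd_mul, hprime.dvd_mul,
    Int.natCast_dvd_natCast, Int.natCast_dvd_natCast, Int.natCast_dvd_natCast,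
    fibdvd p α hα, fibdvd p α hα]
  have hpq' : ¬ q % p = 0 := fun h => hpq (Nat.dvd_of_mod_eq_zero h)
  simp only [Nat.dvd_iff_mod_eq_zero]
  tauto
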